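/- If σ_max(B) < σ_min(A), then ‖A^{-1} B‖ < 1 (spectral norm), and consequently the generalized absolute value equation Ax - B|x| = b has at most one solution for every b ∈ ℝ^n. -/

import Mathlib

open Matrix

/-- Componentwise absolute value of a vector. -/
noncomputable def absv {n : ℕ} (x : Fin n → ℝ) : Fin n → ℝ := fun i => |x i|

/-- Euclidean norm of a vector. -/
noncomputable def enorm {n : ℕ} (x : Fin n → ℝ) : ℝ := Real.sqrt (∑ i, x i ^ 2)

/-- Largest singular value (spectral / operator 2-norm). -/
noncomputable def sigmaMax {n : ℕ} (A : Matrix (Fin n) (Fin n) ℝ) : ℝ :=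
  sSup {r | ∃ x : Fin n → ℝ, _root_.enorm x = 1 ∧ r = _root_.enorm (A.mulVec x)}

/-- Smallest singular value. -/
noncomputable def sigmaMin {n : ℕ} (A : Matrix (Fin n) (Fin n) ℝ) : ℝ :=
  sInf {r | ∃ x : Fin n → ℝ, _root_.enorm x = 1 ∧ r = _root_.enorm (A.mulVec x)}

/-- Spectral radius of a real matrix (via its complex spectrum). -/
noncomputable def specRad {n : ℕ} (A : Matrix (Fin n) (Fin n) ℝ) : ENNReal :=
  spectralRadius ℂ (A.map (Complex.ofReal ·))

open scoped Matrix.Norms.L2Operator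

lemma enorm_eq_norm {n : ℕ} (x : Fin n → ℝ) :
    _root_.enorm x = ‖(EuclideanSpace.equiv (Fin n) ℝ).symm x‖ := by
  rw [EuclideanSpace.norm_eq]
  simp [_root_.enorm, sq_abs]

lemma enorm_nonneg {n : ℕ} (x : Fin n → ℝ) : 0 ≤ _root_.enorm x := Real.sqrt_nonneg _

lemma enorm_zero' {n : ℕ} : _root_.enorm (0 : Fin n → ℝ) = 0 := by simp [_root_.enorm]

lemma enorm_eq_zero_v {n : ℕ} {x : Fin n → ℝ} (hx : _root_.enorm x = 0) : x = 0 := by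
  rw [enorm_eq_norm, norm_eq_zero] at hx
  simpa using congrArg (EuclideanSpace.equiv (Fin n) ℝ) hx

lemma enorm_smul' {n : ℕ} (c : ℝ) (x : Fin n → ℝ) : _root_.enorm (c • x) = |c| * _root_.enorm x := by
  rw [enorm_eq_norm, enorm_eq_norm, ← Real.norm_eq_abs, ← norm_smul]
  rfl

lemma sv_set_nonempty {n : ℕ} (hn : 0 < n) (M : Matrix (Fin n) (Fin n) ℝ) :
    {r | ∃ x : Fin n → ℝ, _root_.enorm x = 1 ∧ r = _root_.enorm (M.mulVec x)}.Nonempty := by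
  classical
  set e : Fin n → ℝ := fun i => if i = ⟨0, hn⟩ then 1 else 0 with he
  refine ⟨_root_.enorm (M.mulVec e), e, ?_, rfl⟩
  have hs : ∀ i, e i ^ 2 = if i = ⟨0, hn⟩ then 1 else 0 := by
    intro i
    by_cases hi : i = ⟨0, hn⟩ <;> simp [he, hi]
  simp [_root_.enorm, hs]

lemma sv_set_bddAbove {n : ℕ} (M : Matrix (Fin n) (Fin n) ℝ) :
    BddAbove {r | ∃ x : Fin n → ℝ, _root_.enorm x = 1 ∧ r = _root_.enorm (M.mulVec x)} := by
  refine ⟨‖M‖, ?_⟩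
  rintro r ⟨x, hx, rfl⟩
  have hb : _root_.enorm (M.mulVec x) ≤ ‖M‖ * _root_.enorm x := by
    rw [enorm_eq_norm (M.mulVec x), enorm_eq_norm x]
    exact M.l2_opNorm_mulVec ((EuclideanSpace.equiv (Fin n) ℝ).symm x)
  rw [hx, mul_one] at hb
  exact hb

lemma sigmaMax_nonneg {n : ℕ} (hn : 0 < n) (M : Matrix (Fin n) (Fin n) ℝ) :
    0 ≤ sigmaMax M := by
  obtain ⟨r, y, hy, rfl⟩ := sv_set_nonempty hn M
  exact le_trans (enorm_nonneg _) (le_csSup (sv_set_bddAbove M) ⟨y, hy, rfl⟩)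

lemma enorm_mulVec_le {n : ℕ} (hn : 0 < n) (M : Matrix (Fin n) (Fin n) ℝ) (x : Fin n → ℝ) :
    _root_.enorm (M.mulVec x) ≤ sigmaMax M * _root_.enorm x := by
  rcases eq_or_ne (_root_.enorm x) 0 with hx | hx
  · rw [enorm_eq_zero_v hx, Matrix.mulVec_zero, enorm_zero', mul_zero]
  · have hxpos : 0 < _root_.enorm x := lt_of_le_of_ne (enorm_nonneg x) (Ne.symm hx)
    set u : Fin n → ℝ := (_root_.enorm x)⁻¹ • x with hu
    have hu1 : _root_.enorm u = 1 := by
      rw [hu, enorm_smul', abs_of_pos (inv_pos.mpr hxpos), inv_mul_cancel₀ hx]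
    have hle : _root_.enorm (M.mulVec u) ≤ sigmaMax M :=
      le_csSup (sv_set_bddAbove M) ⟨u, hu1, rfl⟩
    have hMu : _root_.enorm (M.mulVec u) = (_root_.enorm x)⁻¹ * _root_.enorm (M.mulVec x) := by
      rw [hu, Matrix.mulVec_smul, enorm_smul', abs_of_pos (inv_pos.mpr hxpos)]
    rw [hMu] at hle
    calc _root_.enorm (M.mulVec x) = (_root_.enorm x)⁻¹ * _root_.enorm (M.mulVec x) * _root_.enorm x := by
          field_simp
      _ ≤ sigmaMax M * _root_.enorm x := mul_le_mul_of_nonneg_right hle (le_of_lt hxpos)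

lemma sigmaMin_le_enorm_mulVec {n : ℕ} (M : Matrix (Fin n) (Fin n) ℝ) (x : Fin n → ℝ) :
    sigmaMin M * _root_.enorm x ≤ _root_.enorm (M.mulVec x) := by
  rcases eq_or_ne (_root_.enorm x) 0 with hx | hx
  · rw [hx, mul_zero]
    exact enorm_nonneg _
  · have hxpos : 0 < _root_.enorm x := lt_of_le_of_ne (enorm_nonneg x) (Ne.symm hx)
    set u : Fin n → ℝ := (_root_.enorm x)⁻¹ • x with hu
    have hu1 : _root_.enorm u = 1 := by
      rw [hu, enorm_smul', abs_of_pos (inv_pos.mpr hxpos), inv_mul_cancel₀ hx]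
    have hbdd : BddBelow {r | ∃ x : Fin n → ℝ, _root_.enorm x = 1 ∧ r = _root_.enorm (M.mulVec x)} := by
      refine ⟨0, ?_⟩
      rintro r ⟨y, _, rfl⟩
      exact enorm_nonneg _
    have hle : sigmaMin M ≤ _root_.enorm (M.mulVec u) := csInf_le hbdd ⟨u, hu1, rfl⟩
    have hMu : _root_.enorm (M.mulVec u) = (_root_.enorm x)⁻¹ * _root_.enorm (M.mulVec x) := by
      rw [hu, Matrix.mulVec_smul, enorm_smul', abs_of_pos (inv_pos.mpr hxpos)]
    rw [hMu] at hle
    calc sigmaMin M * _root_.enorm x ≤ (_root_.enorm x)⁻¹ * _root_.enorm (M.mulVec x) * _root_.enorm x :=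
          mul_le_mul_of_nonneg_right hle (le_of_lt hxpos)
      _ = _root_.enorm (M.mulVec x) := by field_simp

lemma enorm_mono {n : ℕ} {u v : Fin n → ℝ} (h : ∀ i, |u i| ≤ |v i|) :
    _root_.enorm u ≤ _root_.enorm v := by
  apply Real.sqrt_le_sqrt
  apply Finset.sum_le_sum
  intro i _
  rw [← sq_abs (u i), ← sq_abs (v i)]
  exact pow_le_pow_left₀ (abs_nonneg _) (h i) 2

theorem stmt12 {n : ℕ} (A B : Matrix (Fin n) (Fin n) ℝ)
    (h : sigmaMax B < sigmaMin A) :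
    sigmaMax (A⁻¹ * B) < 1 ∧
      ∀ b x y : Fin n → ℝ,
        A.mulVec x - B.mulVec (absv x) = b → A.mulVec y - B.mulVec (absv y) = b → x = y := by
  rcases Nat.eq_zero_or_pos n with hn | hn
  · exfalso
    have hempty : ∀ M : Matrix (Fin n) (Fin n) ℝ,
        {r | ∃ x : Fin n → ℝ, _root_.enorm x = 1 ∧ r = _root_.enorm (M.mulVec x)} = ∅ := by
      intro M
      ext r
      simp only [Set.mem_setOf_eq, Set.mem_empty_iff_false, iff_false]
      rintro ⟨x, hx, -⟩
      subst hn
      simp [_root_.enorm] at hx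
    rw [sigmaMax, sigmaMin, hempty A, hempty B, Real.sSup_empty, Real.sInf_empty] at h
    exact lt_irrefl 0 h
  -- n > 0
  have hA0 : 0 < sigmaMin A := lt_of_le_of_lt (sigmaMax_nonneg hn B) h
  -- A is invertible
  have hker : ∀ z : Fin n → ℝ, A.mulVec z = 0 → z = 0 := by
    intro z hz
    have hle := sigmaMin_le_enorm_mulVec A z
    rw [hz, enorm_zero'] at hle
    have hz0 : _root_.enorm z = 0 :=
      le_antisymm (by nlinarith [enorm_nonneg z]) (enorm_nonneg z)
    exact enorm_eq_zero_v hz0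
  have hinj : Function.Injective A.mulVec := by
    intro a b hab
    have h1 : A.mulVec (a - b) = 0 := by
      rw [Matrix.mulVec_sub, hab, sub_self]
    exact sub_eq_zero.mp (hker _ h1)
  have hunit : IsUnit A.det :=
    (Matrix.isUnit_iff_isUnit_det A).mp (Matrix.mulVec_injective_iff_isUnit.mp hinj)
  have hAAinv : A * A⁻¹ = 1 := Matrix.mul_nonsing_inv A hunit
  have hAinvA : A⁻¹ * A = 1 := Matrix.nonsing_inv_mul A hunit
  -- key bound
  have hkey : ∀ x : Fin n → ℝ, _root_.enorm ((A⁻¹ * B).mulVec x) ≤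
      sigmaMax B / sigmaMin A * _root_.enorm x := by
    intro x
    set y : Fin n → ℝ := (A⁻¹ * B).mulVec x with hy
    have hAy : A.mulVec y = B.mulVec x := by
      rw [hy, Matrix.mulVec_mulVec, ← Matrix.mul_assoc, hAAinv, Matrix.one_mul]
    have h1 : sigmaMin A * _root_.enorm y ≤ _root_.enorm (B.mulVec x) := by
      rw [← hAy]; exact sigmaMin_le_enorm_mulVec A y
    have h2 : _root_.enorm (B.mulVec x) ≤ sigmaMax B * _root_.enorm x := enorm_mulVec_le hn B x
    rw [div_mul_eq_mul_div, le_div_iff₀ hA0, mul_comm (_root_.enorm y) (sigmaMin A)]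
    exact le_trans h1 h2
  have hclt : sigmaMax B / sigmaMin A < 1 := (div_lt_one hA0).mpr h
  constructor
  · apply lt_of_le_of_lt (csSup_le (sv_set_nonempty hn _) ?_) hclt
    rintro r ⟨x, hx, rfl⟩
    have := hkey x
    rwa [hx, mul_one] at this
  · intro b x y hx hy
    have heq : A.mulVec (x - y) = B.mulVec (absv x - absv y) := by
      rw [Matrix.mulVec_sub, Matrix.mulVec_sub]
      have := hx.trans hy.symm
      linear_combination (norm := module) this
    have hxy : x - y = (A⁻¹ * B).mulVec (absv x - absv y) := by
      have := congrArg (A⁻¹.mulVec) heq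
      rwa [Matrix.mulVec_mulVec, Matrix.mulVec_mulVec, hAinvA, Matrix.one_mulVec] at this
    have habs : _root_.enorm (absv x - absv y) ≤ _root_.enorm (x - y) := by
      apply enorm_mono
      intro i
      have := abs_abs_sub_abs_le_abs_sub (x i) (y i)
      simpa [absv] using this
    have hchain : _root_.enorm (x - y) ≤ sigmaMax B / sigmaMin A * _root_.enorm (x - y) := by
      calc _root_.enorm (x - y) = _root_.enorm ((A⁻¹ * B).mulVec (absv x - absv y)) := by rw [← hxy]
        _ ≤ sigmaMax B / sigmaMin A * _root_.enorm (absv x - absv y) := hkey _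
        _ ≤ sigmaMax B / sigmaMin A * _root_.enorm (x - y) := by
            apply mul_le_mul_of_nonneg_left habs
            exact div_nonneg (sigmaMax_nonneg hn B) (le_of_lt hA0)
    have h0 : _root_.enorm (x - y) = 0 := by
      by_contra hne
      have hpos : 0 < _root_.enorm (x - y) := lt_of_le_of_ne (enorm_nonneg _) (Ne.symm hne)
      nlinarith
    have := enorm_eq_zero_v h0
    exact sub_eq_zero.mp this
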